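/- (Initial scale estimate) Fix p > 2d. There exist a' > 0, δ > 0 (depending only on d and p), C > 0, and γ₀ such that for all γ > γ₀ the following holds with L̃₀ = γ^δ and Λ = ([−L̃₀, L̃₀]^d ∩ ℤ^d) + i, i ∈ ℤ^d: for any finite set S ⊂ [−2d−γ, 2d+γ] containing at most C·γ elements, with probability at least 1 − C·L̃₀^{−p}, for every E ∈ S and every j ∈ ∂Λ, E − H_Λ is invertible and |(E − H_Λ)⁻¹(i, j)| ≤ e^{−a'(log γ)|i−j|}. -/

import Mathlib

open MeasureTheory Finset
open scoped NNReal ENNReal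

noncomputable section

/-- Sites of the lattice `ℤ^d`. -/
abbrev Site (d : ℕ) := Fin d → ℤ

/-- The `ℓ¹`-norm `|i|` of a lattice site. -/
def l1 {d : ℕ} (i : Site d) : ℕ := ∑ k, (i k).natAbs

/-- The `k`-th unit coordinate vector in `ℤ^d`. -/
def unitVec {d : ℕ} (k : Fin d) : Site d := fun l => if l = k then 1 else 0

/-- `P` is the product measure `∏_{j ∈ ℤ^d} g(dv_j)` on `Ω = ℝ^{ℤ^d}`: it is a probability
measure whose finite-dimensional cylinder marginals are products of copies of `g`. -/
def IsProductMeasure {d : ℕ} (g : Measure ℝ) (P : Measure (Site d → ℝ)) : Prop :=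
  IsProbabilityMeasure P ∧
    ∀ (s : Finset (Site d)) (A : Site d → Set ℝ), (∀ j, MeasurableSet (A j)) →
      P {v | ∀ j ∈ s, v j ∈ A j} = ∏ j ∈ s, g (A j)

/-- The single-site distribution `g` is a probability measure supported in `[-1,1]`,
absolutely continuous with a bounded density. -/
def NiceDisorder (g : Measure ℝ) : Prop :=
  IsProbabilityMeasure g ∧ g (Set.Icc (-1 : ℝ) 1)ᶜ = 0 ∧
    ∃ C : ℝ≥0, ∀ A : Set ℝ, g A ≤ (C : ℝ≥0∞) * volume A

/-- The finite-volume Anderson Hamiltonian `H_Λ = Δ_Λ + γ V` as a matrix on `ℓ²(Λ)`: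
`H_Λ(i,j) = 1` if `|i-j|_{ℓ¹} = 1` (both in `Λ`), plus the diagonal `γ v_i`. -/
def HMat {d : ℕ} (γ : ℝ) (v : Site d → ℝ) (Λ : Finset (Site d)) : Matrix Λ Λ ℂ :=
  fun i j => (if l1 (i.1 - j.1) = 1 then 1 else 0) +
    (if i = j then ((γ * v i.1 : ℝ) : ℂ) else 0)

/-- The cube `([-L, L]^d ∩ ℤ^d) + i` centered at `i`. -/
def cube {d : ℕ} (L : ℝ) (i : Site d) : Finset (Site d) :=
  (Fintype.piFinset fun _ => Finset.Icc (-⌊L⌋) ⌊L⌋).image (· + i)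

/-- `j` is a boundary site of `Λ`: it lies in `Λ` and has a nearest neighbor outside `Λ`. -/
def IsBoundary {d : ℕ} (Λ : Finset (Site d)) (j : Site d) : Prop :=
  j ∈ Λ ∧ ∃ j', l1 (j - j') = 1 ∧ j' ∉ Λ

/-- The localization event for the finite-volume Hamiltonian `H_Λ` centered at `i`:
for every energy `E ∈ S` and every boundary site `j` of `Λ`, the matrix `E - H_Λ` is
invertible and the Green's function decays as
`|(E - H_Λ)⁻¹(i,j)| ≤ C·e^{-a(log γ)|i-j|}`. -/
def LocEvent {d : ℕ} (γ a C : ℝ) (Λ : Finset (Site d)) (i : Site d)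
    (S : Finset ℝ) : Set (Site d → ℝ) :=
  {v | ∀ E ∈ S, ∀ j, IsBoundary Λ j →
    IsUnit ((E : ℂ) • (1 : Matrix Λ Λ ℂ) - HMat γ v Λ) ∧
    ∀ (hi : i ∈ Λ) (hj : j ∈ Λ),
      ‖(((E : ℂ) • (1 : Matrix Λ Λ ℂ) - HMat γ v Λ)⁻¹) ⟨i, hi⟩ ⟨j, hj⟩‖ ≤
        C * Real.exp (-(a * Real.log γ) * (l1 (i - j) : ℝ))}

/-!
Write `E - H_Λ = diag D - A_Λ` with `D x = E - γ v x` and `A_Λ` the adjacency matrix of `Λ`.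
If every `‖D x‖ ≥ M` and `2dR ≤ M/2`, a maximum principle for the columns of the inverse `G`,
weighted by `R ^ |z - y|`, gives `‖G x y‖ ≤ (2/M) R^{-|x-y|}`. If one site `b` is resonant,
`η ≤ ‖D b‖ < M`, replace `D b` by `D₁ b = D b + c` with `‖c‖ = M` pointing away from `0`. Then all
diagonal entries of `D₁` are at least `M`, and the Sherman–Morrison formula recovers `G` from `G₁`
at the cost of a factor `c / (1 - c G₁ b b)` of size `M² / η`: indeed
`(1 - c G₁ b b) D₁ b = D b - c ∑_{z ∼ b} G₁ z b` and the sum is `O(d² / (M ‖D₁ b‖))`.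

With `t = γ^{1/32}`, `M = t⁸`, `η = t⁻⁴` and `R = t²` this bounds the Green's function between the
centre and the boundary of a cube of radius `L ≥ 8` by `t^{-|i-j|} = e^{-(log γ)|i-j|/32}`, unless for
some `E ∈ S` one site has `|E - γ v x| < η` or two sites have `|E - γ v x| < M`. As `g` has a
bounded density, these events have probability `O(|S| |Λ| η / γ)` and `O(|S| |Λ|² (M / γ)²)`, and
both are at most `L^{-p} / 2` for `L = γ^δ` with `δ = 1 / (16 (d + p))`.
-/

open scoped Matrix

namespace AndersonInitialScale

variable {d : ℕ}

/-- The Sherman–Morrison formula, for a change of one diagonal entry. -/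
lemma inv_sub_single_apply {n K : Type*} [Fintype n] [DecidableEq n] [Field K]
    {A : Matrix n n K} (hA : IsUnit A) (b : n) (c : K) (hs : 1 - c * A⁻¹ b b ≠ 0) :
    IsUnit (A - Matrix.single b b c) ∧ ∀ x y,
      (A - Matrix.single b b c)⁻¹ x y = A⁻¹ x y + c / (1 - c * A⁻¹ b b) * (A⁻¹ x b * A⁻¹ b y) := by
  have hAA : A * A⁻¹ = 1 := Matrix.mul_nonsing_inv _ ((Matrix.isUnit_iff_isUnit_det _).mp hA)
  have hE : Matrix.single b b c = c • Matrix.single b b (1 : K) := by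
    rw [Matrix.smul_single, smul_eq_mul, mul_one]
  have hEGE : Matrix.single b b (1 : K) * A⁻¹ * Matrix.single b b 1 =
      A⁻¹ b b • Matrix.single b b 1 := by
    rw [Matrix.single_mul_mul_single, Matrix.smul_single]; simp
  set k := c / (1 - c * A⁻¹ b b)
  have hk : k - c - c * k * A⁻¹ b b = 0 := by simp only [k]; field_simp; ring
  have hright : (A - Matrix.single b b c) * (A⁻¹ + k • (A⁻¹ * Matrix.single b b 1 * A⁻¹)) = 1 :=
    calc (A - Matrix.single b b c) * (A⁻¹ + k • (A⁻¹ * Matrix.single b b 1 * A⁻¹))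
        = A * A⁻¹ + k • (A * A⁻¹ * Matrix.single b b 1 * A⁻¹) - c • (Matrix.single b b 1 * A⁻¹)
          - (c * k) • (Matrix.single b b 1 * A⁻¹ * Matrix.single b b 1 * A⁻¹) := by
          rw [hE]
          simp only [Matrix.sub_mul, Matrix.mul_add, Matrix.mul_smul, Matrix.smul_mul,
            Matrix.mul_assoc]
          module
      _ = 1 + (k - c - c * k * A⁻¹ b b) • (Matrix.single b b 1 * A⁻¹) := by
          rw [hEGE, hAA, Matrix.one_mul, Matrix.smul_mul]
          module
      _ = 1 := by rw [hk, zero_smul, add_zero]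
  refine ⟨(Matrix.isUnit_iff_isUnit_det _).mpr (Matrix.isUnit_det_of_right_inverse hright),
    fun x y => ?_⟩
  rw [Matrix.inv_eq_right_inv hright]
  simp [Matrix.mul_apply, Matrix.single_apply, ite_and]

lemma exists_norm_eq_and_norm_add_eq {E : Type*} [NormedAddCommGroup E] [NormedSpace ℝ E]
    {z : E} (hz : z ≠ 0) {M : ℝ} (hM : 0 ≤ M) : ∃ c : E, ‖c‖ = M ∧ ‖z + c‖ = ‖z‖ + M := by
  have hc : ‖(M / ‖z‖) • z‖ = M := by
    rw [norm_smul, Real.norm_of_nonneg (by positivity), div_mul_cancel₀ _ (norm_ne_zero_iff.mpr hz)]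
  exact ⟨_, hc, by rw [(SameRay.sameRay_nonneg_smul_right z (by positivity)).norm_add, hc]⟩

lemma measure_biUnion_le_ofReal {ι α : Type*} [MeasurableSpace α] {μ : Measure α} {s : Finset ι}
    {A : ι → Set α} {f : ι → ℝ} (hf : ∀ i ∈ s, 0 ≤ f i)
    (hA : ∀ i ∈ s, μ (A i) ≤ ENNReal.ofReal (f i)) :
    μ (⋃ i ∈ s, A i) ≤ ENNReal.ofReal (∑ i ∈ s, f i) := by
  rw [ENNReal.ofReal_sum_of_nonneg hf]
  exact (measure_biUnion_finset_le s A).trans (sum_le_sum hA)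

lemma one_sub_le_measure_of_measure_compl_le {α : Type*} [MeasurableSpace α] {μ : Measure α}
    [IsProbabilityMeasure μ] {s : Set α} {t : ℝ≥0∞} (h : μ sᶜ ≤ t) : 1 - t ≤ μ s := by
  rw [tsub_le_iff_right, ← measure_univ (μ := μ)]
  exact (measure_univ_le_add_compl s).trans (by gcongr)

lemma l1_neg (w : Site d) : l1 (-w) = l1 w := by
  simp [l1]

lemma l1_sub_comm (x y : Site d) : l1 (x - y) = l1 (y - x) := by
  rw [← l1_neg, neg_sub]

@[simp]
lemma l1_zero : l1 (0 : Site d) = 0 := by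
  simp [l1]

lemma l1_sub_le_add (x y z : Site d) : l1 (x - z) ≤ l1 (x - y) + l1 (y - z) := by
  rw [l1, l1, l1, ← Finset.sum_add_distrib]
  refine Finset.sum_le_sum fun k _ => ?_
  simpa using Int.natAbs_add_le (x k - y k) (y k - z k)

lemma natAbs_apply_le_l1 (w : Site d) (k : Fin d) : (w k).natAbs ≤ l1 w :=
  Finset.single_le_sum (f := fun k => (w k).natAbs) (fun _ _ => Nat.zero_le _) (mem_univ k)

lemma eq_unitVec_or_eq_neg_of_l1_eq_one {w : Site d} (h : l1 w = 1) :
    ∃ k, w = unitVec k ∨ w = -unitVec k := by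
  obtain ⟨k, -, hk⟩ := Finset.exists_ne_zero_of_sum_ne_zero (h.trans_ne one_ne_zero)
  have hsplit := Finset.add_sum_erase univ (fun j => (w j).natAbs) (mem_univ k)
  rw [← l1, h] at hsplit
  have hk1 : (w k).natAbs = 1 := by omega
  have hzero : ∑ j ∈ univ.erase k, (w j).natAbs = 0 := by omega
  have hrest : ∀ j, j ≠ k → w j = 0 := fun j hj => Int.natAbs_eq_zero.mp <|
    Finset.sum_eq_zero_iff.mp hzero j (mem_erase.mpr ⟨hj, mem_univ j⟩)
  refine ⟨k, (Int.natAbs_eq_iff.mp hk1).imp (fun hw => ?_) (fun hw => ?_)⟩ <;>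
  · funext j
    by_cases hj : j = k
    · subst hj; simpa [unitVec] using hw
    · simp [unitVec, hj, hrest j hj]

section Neighbours

variable (Λ : Finset (Site d))

def nbrs (x : Site d) : Finset Λ := {z | l1 (x - z.1) = 1}

lemma ne_of_mem_nbrs {x : Site d} {z : Λ} (hz : z ∈ nbrs Λ x) : z.1 ≠ x := by
  rintro rfl
  simp [nbrs] at hz

lemma card_nbrs_le (x : Site d) : #(nbrs Λ x) ≤ 2 * d := by
  classical
  let signedUnits : Finset (Site d) :=
    univ.image fun q : Fin d × Bool => if q.2 then unitVec q.1 else -unitVec q.1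
  calc #(nbrs Λ x) ≤ #signedUnits := by
        refine Finset.card_le_card_of_injOn (fun z => x - z.1) (fun z hz => ?_)
          (fun a _ b _ hab => Subtype.ext (sub_right_injective hab))
        obtain ⟨k, hk | hk⟩ := eq_unitVec_or_eq_neg_of_l1_eq_one (mem_filter.mp hz).2
        · exact mem_image.mpr ⟨(k, true), mem_univ _, by simp [hk]⟩
        · exact mem_image.mpr ⟨(k, false), mem_univ _, by simp [hk]⟩
    _ ≤ #(univ : Finset (Fin d × Bool)) := card_image_le
    _ = 2 * d := by simp [mul_comm]

lemma sum_nbrs_le {x : Site d} {f : Λ → ℝ} {B : ℝ} (hB : 0 ≤ B) (hf : ∀ z ∈ nbrs Λ x, f z ≤ B) :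
    ∑ z ∈ nbrs Λ x, f z ≤ 2 * d * B := by
  calc ∑ z ∈ nbrs Λ x, f z ≤ #(nbrs Λ x) * B := by
        simpa using Finset.sum_le_card_nsmul _ _ _ hf
    _ ≤ 2 * d * B := by gcongr; exact_mod_cast card_nbrs_le Λ x

def adjMat : Matrix Λ Λ ℂ := Matrix.of fun x y => if l1 (x.1 - y.1) = 1 then 1 else 0

lemma adjMat_transpose : (adjMat Λ)ᵀ = adjMat Λ := by
  ext x y
  simp [adjMat, l1_sub_comm x.1]

lemma adjMat_mul_apply (G : Matrix Λ Λ ℂ) (x y : Λ) :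
    (adjMat Λ * G) x y = ∑ z ∈ nbrs Λ x, G z y := by
  simp [adjMat, Matrix.mul_apply, nbrs, Finset.sum_filter]

end Neighbours

section GreenFunction

variable {Λ : Finset (Site d)} {D : Λ → ℂ}

lemma diagonal_sub_adjMat_mul_apply (G : Matrix Λ Λ ℂ) (x y : Λ) :
    ((Matrix.diagonal D - adjMat Λ) * G) x y = D x * G x y - ∑ z ∈ nbrs Λ x.1, G z y := by
  rw [Matrix.sub_mul, Matrix.sub_apply, Matrix.diagonal_mul, adjMat_mul_apply]

lemma mul_diagonal_sub_adjMat_apply (G : Matrix Λ Λ ℂ) (x y : Λ) :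
    (G * (Matrix.diagonal D - adjMat Λ)) x y = G x y * D y - ∑ w ∈ nbrs Λ y.1, G x w := by
  have h := diagonal_sub_adjMat_mul_apply (D := D) Gᵀ y x
  rw [← Matrix.diagonal_transpose D, ← adjMat_transpose Λ, ← Matrix.transpose_sub,
    ← Matrix.transpose_mul, Matrix.transpose_apply] at h
  simpa [mul_comm] using h

lemma isUnit_diagonal_sub_adjMat (hD : ∀ x, 2 * d < ‖D x‖) :
    IsUnit (Matrix.diagonal D - adjMat Λ) := by
  refine (Matrix.isUnit_iff_isUnit_det _).mpr (det_ne_zero_of_sum_row_lt_diag fun x => ?_).isUnit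
  have hoff : ∀ y ∈ univ.erase x, ‖(Matrix.diagonal D - adjMat Λ) x y‖ =
      if y ∈ nbrs Λ x.1 then 1 else 0 := fun y hy => by
    simp [Matrix.diagonal_apply_ne _ (mem_erase.mp hy).1.symm, adjMat, nbrs, apply_ite]
  have hxx : (Matrix.diagonal D - adjMat Λ) x x = D x := by simp [adjMat]
  rw [sum_congr rfl hoff, hxx, ← sum_filter]
  calc ∑ y ∈ (univ.erase x).filter (· ∈ nbrs Λ x.1), (1 : ℝ)
      ≤ #(nbrs Λ x.1) := by
        simpa using card_le_card fun y hy => (mem_filter.mp hy).2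
    _ ≤ 2 * d := by exact_mod_cast card_nbrs_le Λ x.1
    _ < ‖D x‖ := hD x

lemma inv_diagonal_sub_adjMat_row (hU : IsUnit (Matrix.diagonal D - adjMat Λ)) (x y : Λ) :
    D x * (Matrix.diagonal D - adjMat Λ)⁻¹ x y =
      (1 : Matrix Λ Λ ℂ) x y + ∑ z ∈ nbrs Λ x.1, (Matrix.diagonal D - adjMat Λ)⁻¹ z y := by
  have h := diagonal_sub_adjMat_mul_apply (D := D) (Matrix.diagonal D - adjMat Λ)⁻¹ x y
  rw [Matrix.mul_nonsing_inv _ ((Matrix.isUnit_iff_isUnit_det _).mp hU)] at h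
  linear_combination -h

lemma inv_diagonal_sub_adjMat_col (hU : IsUnit (Matrix.diagonal D - adjMat Λ)) (x y : Λ) :
    (Matrix.diagonal D - adjMat Λ)⁻¹ x y * D y =
      (1 : Matrix Λ Λ ℂ) x y + ∑ w ∈ nbrs Λ y.1, (Matrix.diagonal D - adjMat Λ)⁻¹ x w := by
  have h := mul_diagonal_sub_adjMat_apply (D := D) (Matrix.diagonal D - adjMat Λ)⁻¹ x y
  rw [Matrix.nonsing_inv_mul _ ((Matrix.isUnit_iff_isUnit_det _).mp hU)] at h
  linear_combination -h

lemma isUnit_and_norm_inv_le_of_forall_le {M R : ℝ} (hM : 0 < M) (hR : 1 ≤ R)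
    (hRM : 2 * d * R ≤ M / 2) (hD : ∀ x, M ≤ ‖D x‖) :
    IsUnit (Matrix.diagonal D - adjMat Λ) ∧ ∀ x y,
      ‖(Matrix.diagonal D - adjMat Λ)⁻¹ x y‖ ≤ 2 / M * R⁻¹ ^ l1 (x.1 - y.1) := by
  have hdM : 2 * (d : ℝ) < M := by nlinarith
  have hU := isUnit_diagonal_sub_adjMat fun x => hdM.trans_le (hD x)
  refine ⟨hU, fun x y => ?_⟩
  set G := (Matrix.diagonal D - adjMat Λ)⁻¹
  have hrow := inv_diagonal_sub_adjMat_row hU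
  -- maximum principle for the column `y`, weighted by `R ^ |z - y|`
  let F : Λ → ℝ := fun z => R ^ l1 (z.1 - y.1) * ‖G z y‖
  obtain ⟨z₀, -, hz₀⟩ := exists_max_image univ F ⟨x, mem_univ x⟩
  have hF0 : 0 ≤ F z₀ := by positivity
  have hshift : ∀ z ∈ nbrs Λ z₀.1, R ^ l1 (z₀.1 - y.1) * ‖G z y‖ ≤ R * F z₀ := fun z hz => by
    have hl : l1 (z₀.1 - y.1) ≤ l1 (z.1 - y.1) + 1 := by
      have := l1_sub_le_add z₀.1 z.1 y.1
      have := (mem_filter.mp hz).2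
      omega
    calc R ^ l1 (z₀.1 - y.1) * ‖G z y‖ ≤ R ^ (l1 (z.1 - y.1) + 1) * ‖G z y‖ := by gcongr
      _ = R * F z := by simp only [F]; ring
      _ ≤ R * F z₀ := by gcongr; exact hz₀ z (mem_univ z)
  have hdiag : R ^ l1 (z₀.1 - y.1) * ‖(1 : Matrix Λ Λ ℂ) z₀ y‖ ≤ 1 := by
    rcases eq_or_ne z₀ y with rfl | h <;> simp [*]
  have hkey : M * F z₀ ≤ 1 + M / 2 * F z₀ := calc
    M * F z₀ ≤ R ^ l1 (z₀.1 - y.1) * (‖D z₀‖ * ‖G z₀ y‖) := by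
        simp only [F]; rw [mul_left_comm]; gcongr; exact hD z₀
    _ ≤ R ^ l1 (z₀.1 - y.1) * (‖(1 : Matrix Λ Λ ℂ) z₀ y‖ + ∑ z ∈ nbrs Λ z₀.1, ‖G z y‖) := by
        rw [← norm_mul, hrow z₀ y]
        gcongr
        exact (norm_add_le _ _).trans (by gcongr; exact norm_sum_le _ _)
    _ ≤ 1 + 2 * d * (R * F z₀) := by
        rw [mul_add, mul_sum]
        exact add_le_add hdiag (sum_nbrs_le Λ (by positivity) hshift)
    _ ≤ 1 + M / 2 * F z₀ := by rw [← mul_assoc]; gcongr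
  have hFx : F x ≤ 2 / M := (hz₀ x (mem_univ x)).trans (by rw [le_div_iff₀ hM]; linarith)
  rw [inv_pow, ← div_eq_mul_inv, le_div_iff₀ (by positivity), mul_comm]
  exact hFx

lemma norm_inv_diagonal_sub_adjMat_le_two_div {M R : ℝ} (hM : 0 < M) (hR : 1 ≤ R)
    (hRM : 2 * d * R ≤ M / 2) (hD : ∀ x, M ≤ ‖D x‖) (x y : Λ) :
    ‖(Matrix.diagonal D - adjMat Λ)⁻¹ x y‖ ≤ 2 / M :=
  ((isUnit_and_norm_inv_le_of_forall_le hM hR hRM hD).2 x y).trans <|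
    mul_le_of_le_one_right (by positivity) (pow_le_one₀ (by positivity) (inv_le_one_of_one_le₀ hR))

/-- Shifting the diagonal entry at `b` by `c` changes the inverse by a rank-one term whose
denominator is `1 - c * G b b`; this bounds it from below. -/
lemma norm_one_sub_mul_inv_apply_ge {M R : ℝ} (hM : 0 < M) (hR : 1 ≤ R)
    (hRM : 2 * d * R ≤ M / 2) (hD : ∀ x, M ≤ ‖D x‖) (b : Λ) {c : ℂ} (hc : ‖c‖ ≤ ‖D b‖) :
    ‖D b - c‖ - 8 * d ^ 2 / M ≤ ‖1 - c * (Matrix.diagonal D - adjMat Λ)⁻¹ b b‖ * ‖D b‖ := by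
  have hU := (isUnit_and_norm_inv_le_of_forall_le hM hR hRM hD).1
  set G := (Matrix.diagonal D - adjMat Λ)⁻¹
  set r := ∑ z ∈ nbrs Λ b.1, G z b
  have hrow : D b * G b b = 1 + r := by simpa using inv_diagonal_sub_adjMat_row hU b b
  have hcol : ∀ z ∈ nbrs Λ b.1, ‖G z b‖ * ‖D b‖ ≤ 2 * d * (2 / M) := fun z hz => by
    have hzb : z ≠ b := fun h => ne_of_mem_nbrs Λ hz (congrArg Subtype.val h)
    rw [← norm_mul, inv_diagonal_sub_adjMat_col hU z b, Matrix.one_apply_ne hzb, zero_add]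
    exact (norm_sum_le _ _).trans (sum_nbrs_le Λ (by positivity)
      fun w _ => norm_inv_diagonal_sub_adjMat_le_two_div hM hR hRM hD z w)
  have hr : ‖c * r‖ ≤ 8 * d ^ 2 / M := calc
    ‖c * r‖ ≤ ‖r‖ * ‖D b‖ := by rw [norm_mul, mul_comm]; gcongr
    _ ≤ ∑ z ∈ nbrs Λ b.1, ‖G z b‖ * ‖D b‖ := by rw [← sum_mul]; gcongr; exact norm_sum_le _ _
    _ ≤ 2 * d * (2 * d * (2 / M)) := sum_nbrs_le Λ (by positivity) hcol
    _ = 8 * d ^ 2 / M := by ring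
  have hfactor : (1 - c * G b b) * D b = (D b - c) - c * r := by linear_combination (-c) * hrow
  rw [← norm_mul, hfactor]
  linarith [norm_sub_norm_le (D b - c) (c * r)]

lemma norm_add_mul_mul_le {G : Matrix Λ Λ ℂ} {A R : ℝ} (hR : 1 ≤ R) (hA : 0 ≤ A)
    (hG : ∀ x y, ‖G x y‖ ≤ A * R⁻¹ ^ l1 (x.1 - y.1)) (k : ℂ) (b x y : Λ) :
    ‖G x y + k * (G x b * G b y)‖ ≤ (A + ‖k‖ * A ^ 2) * R⁻¹ ^ l1 (x.1 - y.1) := calc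
  ‖G x y + k * (G x b * G b y)‖ ≤ ‖G x y‖ + ‖k‖ * (‖G x b‖ * ‖G b y‖) := by
      rw [← norm_mul, ← norm_mul]; exact norm_add_le _ _
  _ ≤ A * R⁻¹ ^ l1 (x.1 - y.1) +
        ‖k‖ * (A * R⁻¹ ^ l1 (x.1 - b.1) * (A * R⁻¹ ^ l1 (b.1 - y.1))) := by
      gcongr
      exacts [hG x y, hG x b, hG b y]
  _ = A * R⁻¹ ^ l1 (x.1 - y.1) + ‖k‖ * A ^ 2 * R⁻¹ ^ (l1 (x.1 - b.1) + l1 (b.1 - y.1)) := by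
      ring
  _ ≤ A * R⁻¹ ^ l1 (x.1 - y.1) + ‖k‖ * A ^ 2 * R⁻¹ ^ l1 (x.1 - y.1) := by
      gcongr _ + _ * ?_
      exact pow_le_pow_of_le_one (by positivity) (inv_le_one_of_one_le₀ hR)
        (l1_sub_le_add x.1 b.1 y.1)
  _ = (A + ‖k‖ * A ^ 2) * R⁻¹ ^ l1 (x.1 - y.1) := by ring

lemma isUnit_and_norm_inv_le_of_single_resonance {M R η : ℝ} (hM : 0 < M) (hR : 1 ≤ R)
    (hRM : 2 * d * R ≤ M / 2) (hη : 0 < η) (hηM : 16 * d ^ 2 ≤ η * M) {b : Λ}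
    (hb : η ≤ ‖D b‖) (hbM : ‖D b‖ ≤ M) (hD : ∀ x, x ≠ b → M ≤ ‖D x‖) :
    IsUnit (Matrix.diagonal D - adjMat Λ) ∧ ∀ x y,
      ‖(Matrix.diagonal D - adjMat Λ)⁻¹ x y‖ ≤ (2 / M + 16 / η) * R⁻¹ ^ l1 (x.1 - y.1) := by
  -- push the resonant entry `D b` away from `0` so that every diagonal entry is at least `M`
  obtain ⟨c, hc, hbc⟩ := exists_norm_eq_and_norm_add_eq
    (norm_pos_iff.mp (hη.trans_le hb)) hM.le
  set D₁ := Function.update D b (D b + c)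
  have hD₁ : ∀ x, M ≤ ‖D₁ x‖ := fun x => by
    rcases eq_or_ne x b with rfl | hx
    · simp [D₁, hbc]
    · simpa [D₁, hx] using hD x hx
  have hA : Matrix.diagonal D - adjMat Λ =
      (Matrix.diagonal D₁ - adjMat Λ) - Matrix.single b b c := by
    rw [← Matrix.diagonal_single, sub_right_comm, Matrix.diagonal_sub]
    congr 2 with x
    rcases eq_or_ne x b with rfl | hx <;> simp [D₁, *]
  obtain ⟨hU₁, hG₁⟩ := isUnit_and_norm_inv_le_of_forall_le hM hR hRM hD₁
  set s := 1 - c * (Matrix.diagonal D₁ - adjMat Λ)⁻¹ b b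
  have hs : η / 2 ≤ ‖s‖ * ‖D₁ b‖ := by
    have h := norm_one_sub_mul_inv_apply_ge hM hR hRM hD₁ b (c := c) (by simp [D₁, hbc, hc])
    have h8 : 8 * d ^ 2 / M ≤ η / 2 := by rw [div_le_iff₀ hM]; linarith
    rw [show D₁ b - c = D b by simp [D₁]] at h
    linarith
  have hs0 : s ≠ 0 := fun h => by simp [h] at hs; linarith
  have hcs : ‖c / s‖ * (2 / M) ^ 2 ≤ 16 / η := by
    have hD₁b : ‖D₁ b‖ ≤ 2 * M := by simp [D₁, hbc]; linarith
    have hηs : η ≤ 4 * M * ‖s‖ := by nlinarith [mul_le_mul_of_nonneg_left hD₁b (norm_nonneg s)]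
    rw [norm_div, hc, div_mul_eq_mul_div, div_le_div_iff₀ (norm_pos_iff.mpr hs0) hη]
    field_simp
    nlinarith
  obtain ⟨hU, hinv⟩ := inv_sub_single_apply hU₁ b c hs0
  rw [hA]
  refine ⟨hU, fun x y => ?_⟩
  rw [hinv]
  refine (norm_add_mul_mul_le hR (by positivity) hG₁ _ b x y).trans ?_
  gcongr

lemma isUnit_and_norm_inv_le_of_no_double_resonance {M R η : ℝ} (hM : 0 < M) (hR : 1 ≤ R)
    (hRM : 2 * d * R ≤ M / 2) (hη : 0 < η) (hηM : 16 * d ^ 2 ≤ η * M)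
    (hηD : ∀ x, η ≤ ‖D x‖) (hMD : ∀ x y, x ≠ y → M ≤ ‖D x‖ ∨ M ≤ ‖D y‖) :
    IsUnit (Matrix.diagonal D - adjMat Λ) ∧ ∀ x y,
      ‖(Matrix.diagonal D - adjMat Λ)⁻¹ x y‖ ≤ (2 / M + 16 / η) * R⁻¹ ^ l1 (x.1 - y.1) := by
  by_cases hD : ∀ x, M ≤ ‖D x‖
  · obtain ⟨hU, hG⟩ := isUnit_and_norm_inv_le_of_forall_le hM hR hRM hD
    refine ⟨hU, fun x y => (hG x y).trans ?_⟩
    gcongr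
    exact le_add_of_nonneg_right (by positivity)
  · obtain ⟨b, hb⟩ := not_forall.mp hD
    exact isUnit_and_norm_inv_le_of_single_resonance hM hR hRM hη hηM (hηD b) (not_le.mp hb).le
      fun x hx => (hMD x b hx).resolve_right hb

end GreenFunction

lemma smul_one_sub_HMat (E γ : ℝ) (v : Site d → ℝ) (Λ : Finset (Site d)) :
    (E : ℂ) • (1 : Matrix Λ Λ ℂ) - HMat γ v Λ =
      Matrix.diagonal (fun x : Λ => ((E - γ * v x : ℝ) : ℂ)) - adjMat Λ := by
  ext x y
  rcases eq_or_ne x y with rfl | hxy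
  · simp [HMat, adjMat]
  · simp [HMat, adjMat, hxy, Matrix.one_apply_ne hxy]

section Cube

lemma mem_cube {L : ℝ} {i x : Site d} : x ∈ cube L i ↔ ∀ k, x k - i k ∈ Icc (-⌊L⌋) ⌊L⌋ := by
  simp only [cube, mem_image, Fintype.mem_piFinset]
  refine ⟨?_, fun h => ⟨x - i, fun k => by simpa using h k, by simp⟩⟩
  rintro ⟨a, ha, rfl⟩ k
  simpa using ha k

lemma card_cube_le {L : ℝ} (hL : 1 ≤ L) (i : Site d) : (#(cube L i) : ℝ) ≤ (3 * L) ^ d := by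
  have hfloor : (0 : ℤ) ≤ ⌊L⌋ := Int.floor_nonneg.mpr (by linarith)
  have hIcc : (#(Icc (-⌊L⌋) ⌊L⌋) : ℝ) = 2 * ⌊L⌋ + 1 := by
    have : ((⌊L⌋ + 1 - -⌊L⌋).toNat : ℤ) = 2 * ⌊L⌋ + 1 := by omega
    rw [Int.card_Icc]
    exact_mod_cast this
  calc (#(cube L i) : ℝ) ≤ #(Fintype.piFinset fun _ : Fin d => Icc (-⌊L⌋) ⌊L⌋) := by
        exact_mod_cast card_image_le
    _ = (2 * ⌊L⌋ + 1 : ℝ) ^ d := by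
        rw [Fintype.card_piFinset, prod_const, card_univ, Fintype.card_fin, Nat.cast_pow, hIcc]
    _ ≤ (3 * L) ^ d := by
        have : (0 : ℝ) ≤ ⌊L⌋ := by exact_mod_cast hfloor
        gcongr
        linarith [Int.floor_le L]

lemma floor_le_l1_of_isBoundary {L : ℝ} {i j : Site d} (hj : IsBoundary (cube L i) j) :
    ⌊L⌋ ≤ (l1 (i - j) : ℤ) := by
  obtain ⟨hjΛ, j', hjj', hj'⟩ := hj
  obtain ⟨m, hm⟩ : ∃ m, j' m - i m ∉ Icc (-⌊L⌋) ⌊L⌋ := by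
    by_contra! h
    exact hj' (mem_cube.mpr h)
  have hjm := mem_cube.mp hjΛ m
  have hstep : ((j - j') m).natAbs ≤ 1 := hjj' ▸ natAbs_apply_le_l1 _ m
  have hl1 := natAbs_apply_le_l1 (i - j) m
  simp only [mem_Icc, Pi.sub_apply] at hjm hm hstep hl1
  omega

end Cube

section Resonances

def singleResonance (γ η : ℝ) (Λ : Finset (Site d)) (S : Finset ℝ) : Set (Site d → ℝ) :=
  {v | ∃ E ∈ S, ∃ x ∈ Λ, |E - γ * v x| < η}

def doubleResonance (γ M : ℝ) (Λ : Finset (Site d)) (S : Finset ℝ) : Set (Site d → ℝ) :=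
  {v | ∃ E ∈ S, ∃ x ∈ Λ, ∃ y ∈ Λ, x ≠ y ∧ |E - γ * v x| < M ∧ |E - γ * v y| < M}

lemma compl_locEvent_subset {γ a M R η : ℝ} {Λ : Finset (Site d)} {i : Site d} {S : Finset ℝ}
    (hM : 0 < M) (hR : 1 ≤ R) (hRM : 2 * d * R ≤ M / 2) (hη : 0 < η) (hηM : 16 * d ^ 2 ≤ η * M)
    (hdecay : ∀ j, IsBoundary Λ j →
      (2 / M + 16 / η) * R⁻¹ ^ l1 (i - j) ≤ Real.exp (-(a * Real.log γ) * l1 (i - j))) :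
    (LocEvent γ a 1 Λ i S)ᶜ ⊆ singleResonance γ η Λ S ∪ doubleResonance γ M Λ S := by
  intro v hv
  by_contra hres
  simp only [Set.mem_union, singleResonance, doubleResonance, Set.mem_ofPred_eq, not_or,
    not_exists, not_and, not_lt] at hres
  obtain ⟨hsingle, hdouble⟩ := hres
  refine hv fun E hE j hj => ?_
  set D : Λ → ℂ := fun x => ((E - γ * v x : ℝ) : ℂ)
  have hnorm : ∀ x, ‖D x‖ = |E - γ * v x| := fun x => by
    simp only [D, Complex.norm_real, Real.norm_eq_abs]
  have hηD : ∀ x, η ≤ ‖D x‖ := fun x => (hnorm x).symm ▸ hsingle E hE x x.2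
  have hMD : ∀ x y, x ≠ y → M ≤ ‖D x‖ ∨ M ≤ ‖D y‖ := fun x y hxy => by
    rw [hnorm, hnorm, or_iff_not_imp_left, not_le]
    exact hdouble E hE x x.2 y y.2 (Subtype.coe_injective.ne hxy)
  obtain ⟨hU, hG⟩ := isUnit_and_norm_inv_le_of_no_double_resonance hM hR hRM hη hηM hηD hMD
  rw [smul_one_sub_HMat]
  exact ⟨hU, fun hi hj' => (hG _ _).trans (by simpa using hdecay j hj)⟩

end Resonances

section Probability

variable {g : Measure ℝ} {P : Measure (Site d → ℝ)}

lemma measure_coord_mem (hP : IsProductMeasure g P) (k : Site d) {A : Set ℝ}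
    (hA : MeasurableSet A) : P {v | v k ∈ A} = g A := by
  simpa using hP.2 {k} (fun _ => A) fun _ => hA

lemma measure_coord_mem_and_mem (hP : IsProductMeasure g P) {k l : Site d} (hkl : k ≠ l)
    {A : Set ℝ} (hA : MeasurableSet A) : P {v | v k ∈ A ∧ v l ∈ A} = g A * g A := by
  simpa [prod_pair hkl] using hP.2 {k, l} (fun _ => A) fun _ => hA

lemma measure_ball_le {Cg : ℝ≥0} (hg : ∀ A, g A ≤ Cg * volume A) (c r : ℝ) :
    g (Metric.ball c r) ≤ ENNReal.ofReal (Cg * (2 * r)) := by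
  rw [ENNReal.ofReal_mul Cg.coe_nonneg, ENNReal.ofReal_coe_nnreal, ← Real.volume_ball c r]
  exact hg _

lemma abs_sub_mul_lt_iff_mem_ball {γ E η w : ℝ} (hγ : 0 < γ) :
    |E - γ * w| < η ↔ w ∈ Metric.ball (E / γ) (η / γ) := by
  rw [Metric.mem_ball, Real.dist_eq, lt_div_iff₀ hγ, ← abs_of_pos hγ, ← abs_mul, abs_of_pos hγ,
    abs_sub_comm]
  congr! 2
  field_simp

lemma measure_singleResonance_le (hP : IsProductMeasure g P) {Cg : ℝ≥0}
    (hg : ∀ A, g A ≤ Cg * volume A) {γ η : ℝ} (hγ : 0 < γ) (hη : 0 ≤ η)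
    (Λ : Finset (Site d)) (S : Finset ℝ) :
    P (singleResonance γ η Λ S) ≤ ENNReal.ofReal (#S * #Λ * (Cg * (2 * (η / γ)))) := by
  have hset : singleResonance γ η Λ S =
      ⋃ E ∈ S, ⋃ x ∈ Λ, {v : Site d → ℝ | v x ∈ Metric.ball (E / γ) (η / γ)} := by
    ext v
    simp [singleResonance, abs_sub_mul_lt_iff_mem_ball hγ]
  have hsite : ∀ E x, P {v : Site d → ℝ | v x ∈ Metric.ball (E / γ) (η / γ)} ≤
      ENNReal.ofReal (Cg * (2 * (η / γ))) := fun E x => by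
    rw [measure_coord_mem hP x measurableSet_ball]
    exact measure_ball_le hg _ _
  rw [hset]
  refine (measure_biUnion_le_ofReal (fun _ _ => by positivity) fun E _ =>
    measure_biUnion_le_ofReal (fun _ _ => by positivity) fun x _ => hsite E x).trans_eq ?_
  simp [mul_assoc]

lemma measure_doubleResonance_le (hP : IsProductMeasure g P) {Cg : ℝ≥0}
    (hg : ∀ A, g A ≤ Cg * volume A) {γ M : ℝ} (hγ : 0 < γ) (hM : 0 ≤ M)
    (Λ : Finset (Site d)) (S : Finset ℝ) :
    P (doubleResonance γ M Λ S) ≤ ENNReal.ofReal (#S * #Λ * #Λ * (Cg * (2 * (M / γ))) ^ 2) := by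
  have hset : doubleResonance γ M Λ S = ⋃ E ∈ S, ⋃ x ∈ Λ, ⋃ y ∈ Λ,
      {v : Site d → ℝ | x ≠ y ∧ v x ∈ Metric.ball (E / γ) (M / γ) ∧
        v y ∈ Metric.ball (E / γ) (M / γ)} := by
    ext v
    simp only [doubleResonance, abs_sub_mul_lt_iff_mem_ball hγ, Set.mem_iUnion, Set.mem_ofPred_eq,
      exists_prop]
  have hpair : ∀ E x y, P {v : Site d → ℝ | x ≠ y ∧ v x ∈ Metric.ball (E / γ) (M / γ) ∧
      v y ∈ Metric.ball (E / γ) (M / γ)} ≤ ENNReal.ofReal ((Cg * (2 * (M / γ))) ^ 2) :=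
    fun E x y => by
    rcases eq_or_ne x y with rfl | hxy
    · simp
    · simp only [hxy, ne_eq, not_false_eq_true, true_and]
      rw [measure_coord_mem_and_mem hP hxy measurableSet_ball, sq,
        ENNReal.ofReal_mul (by positivity)]
      exact mul_le_mul' (measure_ball_le hg _ _) (measure_ball_le hg _ _)
  rw [hset]
  refine (measure_biUnion_le_ofReal (fun _ _ => by positivity) fun E _ =>
    measure_biUnion_le_ofReal (fun _ _ => by positivity) fun x _ =>
    measure_biUnion_le_ofReal (fun _ _ => by positivity) fun y _ => hpair E x y).trans_eq ?_
  simp [mul_assoc]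

end Probability

section Scales

lemma decay_factor_le {t : ℝ} (ht : 1 ≤ t) (h18 : 18 ≤ t ^ 4) {n : ℕ} (hn : 8 ≤ n) :
    (2 / t ^ 8 + 16 / (t ^ 4)⁻¹) * (t ^ 2)⁻¹ ^ n ≤ t⁻¹ ^ n := by
  have ht0 : 0 < t := one_pos.trans_le ht
  have hK : 2 / t ^ 8 + 16 / (t ^ 4)⁻¹ ≤ t ^ n := calc
    2 / t ^ 8 + 16 / (t ^ 4)⁻¹ ≤ 2 + 16 * t ^ 4 := by
        rw [div_inv_eq_mul]
        gcongr
        exact div_le_self zero_le_two (one_le_pow₀ ht)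
    _ ≤ t ^ 4 * t ^ 4 := by nlinarith
    _ ≤ t ^ n := by rw [← pow_add]; exact pow_le_pow_right₀ ht hn
  calc (2 / t ^ 8 + 16 / (t ^ 4)⁻¹) * (t ^ 2)⁻¹ ^ n ≤ t ^ n * (t⁻¹ ^ n * t⁻¹ ^ n) := by
        rw [sq, mul_inv, mul_pow]
        gcongr
    _ = t⁻¹ ^ n := by rw [← mul_assoc, ← mul_pow, mul_inv_cancel₀ ht0.ne', one_pow, one_mul]

lemma exp_neg_mul_log_mul_eq {γ : ℝ} (hγ : 0 < γ) (a : ℝ) (n : ℕ) :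
    Real.exp (-(a * Real.log γ) * n) = (γ ^ a)⁻¹ ^ n := by
  rw [Real.rpow_def_of_pos hγ, ← Real.exp_neg, ← Real.exp_nat_mul]
  ring_nf

lemma compl_locEvent_cube_subset {γ L : ℝ} (hγ : 0 < γ) (hK : 18 + 16 * d ^ 2 ≤ γ ^ (1 / 32 : ℝ))
    (hL : 8 ≤ L) (i : Site d) (S : Finset ℝ) :
    (LocEvent γ (1 / 32) 1 (cube L i) i S)ᶜ ⊆
      singleResonance γ ((γ ^ (1 / 32 : ℝ)) ^ 4)⁻¹ (cube L i) S ∪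
        doubleResonance γ ((γ ^ (1 / 32 : ℝ)) ^ 8) (cube L i) S := by
  set t := γ ^ (1 / 32 : ℝ)
  have ht : 1 ≤ t := le_trans (by nlinarith) hK
  have hKt : ∀ k, 1 ≤ k → 18 + 16 * (d : ℝ) ^ 2 ≤ t ^ k := fun k hk =>
    hK.trans (le_self_pow₀ ht (by omega))
  refine compl_locEvent_subset (R := t ^ 2) (by positivity) (one_le_pow₀ ht) ?_ (by positivity) ?_
    fun j hj => ?_
  · have h4d : 4 * (d : ℝ) ≤ t ^ 6 := by nlinarith [hKt 6 (by norm_num)]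
    nlinarith [mul_le_mul_of_nonneg_right h4d (sq_nonneg t)]
  · rw [show (t ^ 4)⁻¹ * t ^ 8 = t ^ 4 by field_simp]
    nlinarith [hKt 4 (by norm_num)]
  · have hn : 8 ≤ l1 (i - j) := by
      have : (8 : ℤ) ≤ l1 (i - j) :=
        (Int.le_floor.mpr (by exact_mod_cast hL)).trans (floor_le_l1_of_isBoundary hj)
      omega
    rw [exp_neg_mul_log_mul_eq hγ]
    exact decay_factor_le ht (by nlinarith [hKt 4 (by norm_num)]) hn

lemma resonance_bound_le {d : ℕ} {γ t u p s N Cg : ℝ} (hγ : γ = t ^ 32) (ht : 1 ≤ t) (hu : 1 ≤ u)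
    (hp : 0 ≤ p) (hut : u ^ ((d : ℝ) + p) = t ^ 2) (hs : s ≤ γ) (hN0 : 0 ≤ N)
    (hN : N ≤ (3 * u) ^ d) (hCg : 0 ≤ Cg) (hK : 4 * 3 ^ d * Cg + 8 * 9 ^ d * Cg ^ 2 ≤ t) :
    s * N * (Cg * (2 * ((t ^ 4)⁻¹ / γ))) + s * N * N * (Cg * (2 * (t ^ 8 / γ))) ^ 2 ≤ u ^ (-p) := by
  subst hγ
  have ht0 : 0 < t := one_pos.trans_le ht
  have hup : u ^ (-p) = u ^ d / t ^ 2 := by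
    rw [show -p = (d : ℝ) - (d + p) by ring, Real.rpow_sub (by linarith), hut, Real.rpow_natCast]
  have hud : u ^ d ≤ t ^ 2 := by
    rw [← hut, ← Real.rpow_natCast]
    exact Real.rpow_le_rpow_of_exponent_le hu (by linarith)
  have hN' : N ≤ 3 ^ d * u ^ d := by rwa [← mul_pow]
  have hc1 : 0 ≤ 4 * 3 ^ d * Cg := by positivity
  have hc2 : 0 ≤ 8 * 9 ^ d * Cg ^ 2 := by positivity
  have h1 : 4 * 3 ^ d * Cg ≤ t ^ 2 := le_trans (by linarith) (le_self_pow₀ ht two_ne_zero)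
  have h2 : 8 * 9 ^ d * Cg ^ 2 ≤ t ^ 12 := le_trans (by linarith) (le_self_pow₀ ht (by norm_num))
  have hterm1 : s * N * (Cg * (2 * ((t ^ 4)⁻¹ / t ^ 32))) ≤ u ^ d / t ^ 2 / 2 := calc
    _ ≤ t ^ 32 * (3 ^ d * u ^ d) * (Cg * (2 * ((t ^ 4)⁻¹ / t ^ 32))) := by gcongr
    _ = 2 * 3 ^ d * Cg * u ^ d / t ^ 4 := by field_simp
    _ ≤ u ^ d / t ^ 2 / 2 := by
        rw [div_div, div_le_div_iff₀ (by positivity) (by positivity)]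
        nlinarith [mul_le_mul_of_nonneg_right h1 (by positivity : (0 : ℝ) ≤ u ^ d * t ^ 2)]
  have hterm2 : s * N * N * (Cg * (2 * (t ^ 8 / t ^ 32))) ^ 2 ≤ u ^ d / t ^ 2 / 2 := calc
    _ ≤ t ^ 32 * (3 ^ d * u ^ d) * (3 ^ d * u ^ d) * (Cg * (2 * (t ^ 8 / t ^ 32))) ^ 2 := by
        gcongr
    _ = 4 * 9 ^ d * Cg ^ 2 * u ^ d * u ^ d / t ^ 16 := by
        rw [show (9 : ℝ) ^ d = 3 ^ d * 3 ^ d by rw [← mul_pow]; norm_num]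
        field_simp
        ring
    _ ≤ u ^ d / t ^ 2 / 2 := by
        rw [div_div, div_le_div_iff₀ (by positivity) (by positivity)]
        have := mul_le_mul_of_nonneg_right h2 (by positivity : (0 : ℝ) ≤ u ^ d * t ^ 4)
        nlinarith [mul_le_mul_of_nonneg_left hud
          (by positivity : (0 : ℝ) ≤ 8 * 9 ^ d * Cg ^ 2 * u ^ d * t ^ 2)]
  linarith

lemma measure_compl_locEvent_cube_le {g : Measure ℝ} {P : Measure (Site d → ℝ)}
    (hP : IsProductMeasure g P) {Cg : ℝ≥0} (hg : ∀ A, g A ≤ Cg * volume A) {p δ γ : ℝ}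
    (hp : 0 ≤ p) (hδ : δ * (d + p) = 1 / 16) (hγ : 1 ≤ γ)
    (hK : 18 + 16 * d ^ 2 + (4 * 3 ^ d * Cg + 8 * 9 ^ d * Cg ^ 2) ≤ γ ^ (1 / 32 : ℝ))
    (hL : 8 ≤ γ ^ δ) (i : Site d) {S : Finset ℝ} (hS : (#S : ℝ) ≤ γ) :
    P (LocEvent γ (1 / 32) 1 (cube (γ ^ δ) i) i S)ᶜ ≤ ENNReal.ofReal ((γ ^ δ) ^ (-p)) := by
  have hγ0 : 0 < γ := one_pos.trans_le hγ
  set t := γ ^ (1 / 32 : ℝ) with ht_def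
  have ht : 1 ≤ t := Real.one_le_rpow hγ (by norm_num)
  have hCg : 0 ≤ 4 * 3 ^ d * (Cg : ℝ) + 8 * 9 ^ d * Cg ^ 2 := by positivity
  refine (measure_mono (compl_locEvent_cube_subset hγ0 (by linarith) hL i S)).trans <|
    (measure_union_le _ _).trans <| (add_le_add
      (measure_singleResonance_le hP hg hγ0 (by positivity) _ _)
      (measure_doubleResonance_le hP hg hγ0 (by positivity) _ _)).trans ?_
  rw [← ENNReal.ofReal_add (by positivity) (by positivity)]
  have hγt : γ = t ^ 32 := by
    rw [ht_def, ← Real.rpow_natCast, ← Real.rpow_mul hγ0.le]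
    norm_num
  have hut : (γ ^ δ) ^ ((d : ℝ) + p) = t ^ 2 := by
    rw [← Real.rpow_mul hγ0.le, hδ, ht_def, ← Real.rpow_natCast, ← Real.rpow_mul hγ0.le]
    norm_num
  exact ENNReal.ofReal_le_ofReal (resonance_bound_le hγt ht (by linarith) hp hut hS
    (Nat.cast_nonneg _) (card_cube_le (by linarith) i) Cg.coe_nonneg
    ((le_add_of_nonneg_left (by positivity)).trans hK))

end Scales

end AndersonInitialScale

open AndersonInitialScale Filter

theorem initial_scale_estimate_general (d : ℕ) (p : ℝ) (hp : 2 * d < p) :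
    ∃ δ > (0:ℝ), ∀ (g : Measure ℝ), NiceDisorder g →
      ∀ P : Measure (Site d → ℝ), IsProductMeasure g P →
      ∃ a' > (0:ℝ), ∃ C > (0:ℝ), ∃ γ₀ : ℝ, ∀ γ : ℝ, γ₀ < γ →
      ∀ i : Site d,
      ∀ S : Finset ℝ, ↑S ⊆ Set.Icc (-(2 * d) - γ) (2 * d + γ) →
        (S.card : ℝ) ≤ C * γ →
        1 - ENNReal.ofReal (C * (γ ^ δ) ^ (-p)) ≤
          P (LocEvent γ a' 1 (cube (γ ^ δ) i) i S) := by
  have hp0 : 0 ≤ p := by linarith [(Nat.cast_nonneg d : (0 : ℝ) ≤ d)]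
  have hdp : 0 < (d : ℝ) + p := by linarith
  have hδ0 : 0 < 1 / (16 * ((d : ℝ) + p)) := by positivity
  have hδ : 1 / (16 * ((d : ℝ) + p)) * (d + p) = 1 / 16 := by field_simp
  refine ⟨1 / (16 * (d + p)), hδ0, fun g hg P hP => ?_⟩
  obtain ⟨-, -, Cg, hg⟩ := hg
  obtain ⟨γ₀, hγ₀⟩ := eventually_atTop.mp <| (eventually_ge_atTop 1).and <|
    ((tendsto_rpow_atTop (by norm_num : (0 : ℝ) < 1 / 32)).eventually_ge_atTop
      (18 + 16 * d ^ 2 + (4 * 3 ^ d * Cg + 8 * 9 ^ d * Cg ^ 2))).and <|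
    (tendsto_rpow_atTop hδ0).eventually_ge_atTop 8
  refine ⟨1 / 32, by norm_num, 1, one_pos, γ₀, fun γ hγ i S _ hS => ?_⟩
  obtain ⟨hγ1, hK, hL⟩ := hγ₀ γ hγ.le
  have : IsProbabilityMeasure P := hP.1
  rw [one_mul] at hS ⊢
  exact one_sub_le_measure_of_measure_compl_le
    (measure_compl_locEvent_cube_le hP hg hp0 hδ hγ1 hK hL i hS)

/-- **Initial scale estimate.** Fix `p > 2d`. There exist `δ > 0` depending only on `d`
and `p`, and `a' > 0`, `C > 0`, `γ₀` such that for all `γ > γ₀` the following holds with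
`L̃₀ = γ^δ` and `Λ = ([-L̃₀, L̃₀]^d ∩ ℤ^d) + i`: for every finite set
`S ⊂ [-2d-γ, 2d+γ]` of at most `C·γ` elements, with probability at least
`1 - C·L̃₀^{-p}`, for every `E ∈ S` and every `j ∈ ∂Λ`, `E - H_Λ` is invertible and
`|(E - H_Λ)⁻¹(i,j)| ≤ e^{-a'(log γ)|i-j|}`. -/
theorem initial_scale_estimate (d : ℕ) (hd : 1 ≤ d) (p : ℝ) (hp : 2 * d < p) :
    ∃ δ > (0:ℝ), ∀ (g : Measure ℝ), NiceDisorder g →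
      ∀ P : Measure (Site d → ℝ), IsProductMeasure g P →
      ∃ a' > (0:ℝ), ∃ C > (0:ℝ), ∃ γ₀ : ℝ, ∀ γ : ℝ, γ₀ < γ →
      ∀ i : Site d,
      ∀ S : Finset ℝ, ↑S ⊆ Set.Icc (-(2 * d) - γ) (2 * d + γ) →
        (S.card : ℝ) ≤ C * γ →
        1 - ENNReal.ofReal (C * (γ ^ δ) ^ (-p)) ≤
          P (LocEvent γ a' 1 (cube (γ ^ δ) i) i S) :=
  initial_scale_estimate_general d p hp
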